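/- Let G be a parity game. There exists a ⊑-least function ρ̄ : V → M_Even satisfying Lift(ρ̄,v) = ρ̄ for every v ∈ V; moreover, this ρ̄ is a game parity progress measure, and ρ̄ ⊑ ρ for every game parity progress measure ρ (so ρ̄ is the least game parity progress measure of G). -/

import Mathlib

open Classical

noncomputable section

instance (priority := 5000) (n : ℕ) : WellFoundedLT (Fin n) :=
  Finite.to_wellFoundedLT

noncomputable instance (priority := 5000) (n : ℕ) : LinearOrder (Lex (Fin n → ℕ)) :=
  inferInstance

/-- Least element of a set, if it exists; otherwise a default value. -/
def sLeast {α : Type*} [Preorder α] (s : Set α) (dflt : α) : α :=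
  if h : ∃ a, IsLeast s a then h.choose else dflt

/-- Greatest element of a set, if it exists; otherwise a default value. -/
def sGreatest {α : Type*} [Preorder α] (s : Set α) (dflt : α) : α :=
  if h : ∃ a, IsGreatest s a then h.choose else dflt

/-- A parity game: a finite set of vertices with a total edge relation, a priority
function and an ownership function (`ownerEven v = true` iff `v ∈ V_Even`). -/
structure ParityGame (V : Type*) [Fintype V] where
  E : V → V → Prop
  total : ∀ v, ∃ w, E v w
  prio : V → ℕ
  ownerEven : V → Bool

namespace ParityGame

variable {V : Type*} [Fintype V] [DecidableEq V] (G : ParityGame V)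

/-- `d` is one plus the maximal priority occurring in the game. -/
def d : ℕ := (Finset.univ.sup G.prio) + 1

/-- The domain of (extended) measures: `⊤` together with `d`-tuples of naturals,
ordered lexicographically with `⊤` maximal.  This is `M_Even_ext` (together with
tuples that are nonzero at even positions, which are never used). -/
abbrev Meas : Type _ := WithTop (Lex (Fin G.d → ℕ))

/-- `nP i` is the number of vertices of priority `i`. -/
def nP (i : ℕ) : ℕ := (Finset.univ.filter (fun v => G.prio v = i)).card

/-- Membership in `M_Even`: `⊤`, or a `d`-tuple which is `0` at even positions and
bounded by `nP i` at odd positions `i`. -/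
def inMEven (m : G.Meas) : Prop :=
  m = ⊤ ∨ ∃ f : Fin G.d → ℕ, m = ((toLex f : Lex (Fin G.d → ℕ)) : G.Meas) ∧
    ∀ i : Fin G.d, (Even (i : ℕ) → f i = 0) ∧ (¬ Even (i : ℕ) → f i ≤ G.nP (i : ℕ))

/-- Membership in `M_Even_ext`: `⊤`, or a `d`-tuple which is `0` at even positions. -/
def inMEvenExt (m : G.Meas) : Prop :=
  m = ⊤ ∨ ∃ f : Fin G.d → ℕ, m = ((toLex f : Lex (Fin G.d → ℕ)) : G.Meas) ∧
    ∀ i : Fin G.d, Even (i : ℕ) → f i = 0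

/-- Truncation of a measure to components `0, …, k` (other components set to `0`);
`⊤` is mapped to `⊤`. -/
def trunc (k : ℕ) (m : G.Meas) : G.Meas :=
  WithTop.map (fun f : Lex (Fin G.d → ℕ) => toLex (fun j : Fin G.d => if (j : ℕ) ≤ k then ofLex f j else 0)) m

/-- `a ≥_k b` : comparison of measures on components `0, …, k` only. -/
def geAt (k : ℕ) (a b : G.Meas) : Prop := G.trunc k b ≤ G.trunc k a

/-- `a >_k b` : strict comparison of measures on components `0, …, k` only. -/
def gtAt (k : ℕ) (a b : G.Meas) : Prop := G.trunc k b < G.trunc k a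

/-- The defining condition of `Prog(ρ,v,w)`. -/
def progCond (ρ : V → G.Meas) (v w : V) (m : G.Meas) : Prop :=
  if Even (G.prio v) then G.geAt (G.prio v) m (ρ w)
  else (G.gtAt (G.prio v) m (ρ w) ∨ (m = ⊤ ∧ ρ w = ⊤))

/-- `Prog(ρ,v,w)`: the least element of `M_Even` satisfying `progCond`. -/
def Prog (ρ : V → G.Meas) (v w : V) : G.Meas :=
  if h : ∃ m, IsLeast {m | G.inMEven m ∧ G.progCond ρ v w m} m then h.choose else ⊤

/-- `ρ` takes values in `M_Even`. -/
def IsMeasure (ρ : V → G.Meas) : Prop := ∀ v, G.inMEven (ρ v)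

/-- Game parity progress measure. -/
def IsGPM (ρ : V → G.Meas) : Prop :=
  G.IsMeasure ρ ∧ ∀ v,
    (G.ownerEven v = true → ∃ w, G.E v w ∧ G.geAt (G.prio v) (ρ v) (G.Prog ρ v w)) ∧
    (G.ownerEven v = false → ∀ w, G.E v w → G.geAt (G.prio v) (ρ v) (G.Prog ρ v w))

/-- A play: an infinite `E`-path. -/
def IsPlay (π : ℕ → V) : Prop := ∀ n, G.E (π n) (π (n + 1))

/-- Priority `p` occurs infinitely often on `π`. -/
def InfOft (π : ℕ → V) (p : ℕ) : Prop := ∀ N, ∃ n, N ≤ n ∧ G.prio (π n) = p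

/-- A play is won by Even iff the least priority occurring infinitely often is even. -/
def WonByEven (π : ℕ → V) : Prop := Even (sInf {p | G.InfOft π p})

/-- Won by player `i` (`true` = Even, `false` = Odd). -/
def WonBy (i : Bool) (π : ℕ → V) : Prop :=
  if i then G.WonByEven π else ¬ G.WonByEven π

/-- The history of a play before time `n`. -/
def hist (π : ℕ → V) (n : ℕ) : List V := List.ofFn (fun k : Fin n => π (k : ℕ))

/-- A (history-dependent) strategy for player `i` is valid if it always moves along edges
from vertices of player `i`. -/
def ValidStrat (i : Bool) (σ : List V → V → V) : Prop :=
  ∀ h v, G.ownerEven v = i → G.E v (σ h v)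

/-- Consistency of a play with a history-dependent strategy of player `i`. -/
def ConsH (i : Bool) (σ : List V → V → V) (π : ℕ → V) : Prop :=
  ∀ n, G.ownerEven (π n) = i → π (n + 1) = σ (hist π n) (π n)

/-- Consistency of a play with a positional strategy of player `i`. -/
def ConsP (i : Bool) (σ : V → V) (π : ℕ → V) : Prop :=
  ∀ n, G.ownerEven (π n) = i → π (n + 1) = σ (π n)

/-- Winning region of player `i`: vertices from which `i` has a winning strategy. -/
def WinRegion (i : Bool) : Set V :=
  {v | ∃ σ : List V → V → V, G.ValidStrat i σ ∧
    ∀ π, G.IsPlay π → π 0 = v → G.ConsH i σ π → G.WonBy i π}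

/-- The `i`-attractor into `U`. -/
def Attr (i : Bool) (U : Set V) : Set V :=
  ⋂₀ {A | U ⊆ A ∧
    (∀ v, G.ownerEven v = i → (∃ w, G.E v w ∧ w ∈ A) → v ∈ A) ∧
    (∀ v, G.ownerEven v ≠ i → (∀ w, G.E v w → w ∈ A) → v ∈ A)}

/-- The guarded attractor `Attr^{≥k}_{Odd,W}(U)`. -/
def GAttr (k : ℕ) (W U : Set V) : Set V :=
  ⋂₀ {A | U ⊆ A ∧ A ⊆ W ∩ {v | k ≤ G.prio v} ∧
    ∀ u ∈ W ∩ {v | k ≤ G.prio v},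
      (G.ownerEven u = false → (∃ w, G.E u w ∧ w ∈ A) → u ∈ A) ∧
      (G.ownerEven u = true → (∀ w, G.E u w → w ∈ W → w ∈ A) → u ∈ A)}

/-- The lifting operator `Lift(ρ, v)`. -/
def Lift (ρ : V → G.Meas) (v : V) : V → G.Meas :=
  Function.update ρ v
    (if G.ownerEven v = true
      then max (ρ v) (sLeast {m | ∃ w, G.E v w ∧ m = G.Prog ρ v w} ⊤)
      else max (ρ v) (sGreatest {m | ∃ w, G.E v w ∧ m = G.Prog ρ v w} ⊤))

/-- The all-zero measure. -/
def zeroMeas : G.Meas := ((toLex (fun _ : Fin G.d => 0) : Lex (Fin G.d → ℕ)) : G.Meas)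

/-- A lifting sequence `ρ₀, …, ρ_N` in which `v` is the first vertex lifted to `⊤`. -/
def FirstTop (ρs : ℕ → V → G.Meas) (N : ℕ) (v : V) : Prop :=
  (∀ u, ρs 0 u = G.zeroMeas) ∧
  (∀ j < N, ∃ u, ρs (j + 1) = G.Lift (ρs j) u ∧
    (∀ w, ρs j w ≤ ρs (j + 1) w) ∧ ρs j ≠ ρs (j + 1)) ∧
  (∀ j < N, ∀ w, ρs j w ≠ ⊤) ∧
  ρs N v = ⊤

/-- The prefix `π 0 … π l` of a play is an `i`-dominated stretch. -/
def domStretchPrefix (π : ℕ → V) (i l : ℕ) : Prop :=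
  (∀ m ≤ l, i ≤ G.prio (π m)) ∧ (∃ m ≤ l, G.prio (π m) = i)

/-- The degree of the prefix `π 0 … π l` with respect to priority `i`: the number of
its vertices of priority `i`. -/
def degree (π : ℕ → V) (i l : ℕ) : ℕ :=
  ((Finset.range (l + 1)).filter (fun m => G.prio (π m) = i)).card

/-- The value `θ(π)` of a play: `⊤` if `π` is won by Odd, and otherwise the tuple whose
component at each odd position `i` is the degree of the maximal `i`-dominated stretch
that is a prefix of `π` (and `0` if there is no such prefix). -/
def theta (π : ℕ → V) : G.Meas :=
  if G.WonByEven π then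
    ((toLex (fun j : Fin G.d =>
      if Even (j : ℕ) then 0
      else sSup {c | ∃ l, G.domStretchPrefix π (j : ℕ) l ∧ c = G.degree π (j : ℕ) l}) :
        Lex (Fin G.d → ℕ)) : G.Meas)
  else ⊤

/-- `U` is an `i`-dominion inside the subgame induced on `W`. -/
def IsDominionIn (W : Set V) (i : Bool) (U : Set V) : Prop :=
  ∃ σ : List V → V → V,
    (∀ h u, u ∈ W → G.ownerEven u = i → G.E u (σ h u) ∧ σ h u ∈ W) ∧
    ∀ π, G.IsPlay π → (∀ n, π n ∈ W) → π 0 ∈ U → G.ConsH i σ π →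
      (∀ n, π n ∈ U) ∧ G.WonBy i π

/-- `U` is an `i`-dominion in `G`. -/
def IsDominion (i : Bool) (U : Set V) : Prop := G.IsDominionIn Set.univ i U

/-- Winning region of player `i` in the subgame induced on `W`. -/
def WinIn (W : Set V) (i : Bool) : Set V :=
  {v | v ∈ W ∧ ∃ σ : List V → V → V,
    (∀ h u, u ∈ W → G.ownerEven u = i → G.E u (σ h u) ∧ σ h u ∈ W) ∧
    ∀ π, G.IsPlay π → (∀ n, π n ∈ W) → π 0 = v → G.ConsH i σ π → G.WonBy i π}

end ParityGame

open ParityGame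

/-!
The operator `liftAll`, which lifts every vertex at once, has as fixed points exactly the
simultaneous fixed points of the `Lift ρ v`. It is monotone and inflationary and preserves the
finitely many `M_Even`-valued functions, so its iterates from the zero function reach a fixed point
`ρ̄`, and monotonicity keeps them below every other fixed point. For `M_Even`-valued `ρ`, the
condition `ρ(v) ≥_{P(v)} Prog(ρ,v,w)` is equivalent to `Prog(ρ,v,w) ≤ ρ(v)`, since `Prog(ρ,v,w)` is
the least element of `M_Even` satisfying a condition that is upward closed for `≥_{P(v)}`; hence
the game parity progress measures are precisely the `M_Even`-valued fixed points of `liftAll`.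
-/

theorem Set.Finite.exists_isLeast {α : Type*} [LinearOrder α] {s : Set α} (hs : s.Finite)
    (hne : s.Nonempty) : ∃ a, IsLeast s a :=
  let ⟨a, ha, hmin⟩ := Set.exists_min_image s id hs hne
  ⟨a, ha, hmin⟩

theorem Set.Finite.exists_isGreatest {α : Type*} [LinearOrder α] {s : Set α} (hs : s.Finite)
    (hne : s.Nonempty) : ∃ a, IsGreatest s a :=
  let ⟨a, ha, hmax⟩ := Set.exists_max_image s id hs hne
  ⟨a, ha, hmax⟩

theorem isLeast_sLeast {α : Type*} [Preorder α] {s : Set α} (h : ∃ a, IsLeast s a) (dflt : α) :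
    IsLeast s (sLeast s dflt) := by
  rw [sLeast, dif_pos h]
  exact h.choose_spec

theorem isGreatest_sGreatest {α : Type*} [Preorder α] {s : Set α} (h : ∃ a, IsGreatest s a)
    (dflt : α) : IsGreatest s (sGreatest s dflt) := by
  rw [sGreatest, dif_pos h]
  exact h.choose_spec

theorem Pi.Lex.monotone_toLex_ite {ι β : Type*} [LinearOrder ι] [PartialOrder β] {p : ι → Prop}
    [DecidablePred p] (hp : Antitone p) (b : β) :
    Monotone fun f : Lex (ι → β) => toLex fun j => if p j then ofLex f j else b := by
  refine monotone_iff_forall_lt.2 fun f g ⟨i, hfg, hi⟩ => ?_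
  by_cases hpi : p i
  · refine le_of_lt ⟨i, fun j hji => ?_, by simpa [hpi] using hi⟩
    simp [hp hji.le hpi, hfg j hji]
  · refine le_of_eq (congrArg toLex (funext fun j => ?_))
    by_cases hpj : p j
    · have hji : j < i := lt_of_not_ge fun hij => hpi (hp hij hpj)
      simp [hpj, hfg j hji]
    · simp [hpj]

theorem Function.exists_isFixedPt_iterate {α : Type*} [PartialOrder α] {f : α → α}
    (hf : ∀ x, x ≤ f x) {x : α} (hfin : (Set.range fun n => f^[n] x).Finite) :
    ∃ n, IsFixedPt f (f^[n] x) := by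
  by_contra! hmoving
  have hmono : StrictMono fun n => f^[n] x := strictMono_nat_of_lt_succ fun n => by
    rw [Function.iterate_succ_apply']
    exact (hf _).lt_of_ne (Ne.symm (hmoving n))
  exact Set.infinite_range_of_injective hmono.injective hfin

theorem Monotone.iterate_le_of_isFixedPt {α : Type*} [Preorder α] {f : α → α} (hf : Monotone f)
    {x y : α} (hxy : x ≤ y) (hy : Function.IsFixedPt f y) (n : ℕ) : f^[n] x ≤ y :=
  (hf.iterate n hxy).trans_eq (hy.iterate n)

namespace ParityGame

variable {V : Type*} [Fintype V] (G : ParityGame V)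

theorem zeroMeas_le (m : G.Meas) : G.zeroMeas ≤ m :=
  (bot_le : (⊥ : G.Meas) ≤ m)

theorem inMEven_zeroMeas : G.inMEven G.zeroMeas :=
  Or.inr ⟨fun _ => 0, rfl, fun _ => ⟨fun _ => rfl, fun _ => Nat.zero_le _⟩⟩

theorem finite_setOf_inMEven : {m : G.Meas | G.inMEven m}.Finite := by
  have hbox : (Set.univ.pi fun i : Fin G.d => Set.Iic (G.nP i)).Finite :=
    Set.Finite.pi fun _ => Set.finite_Iic _
  refine ((hbox.image fun f => ((toLex f : Lex (Fin G.d → ℕ)) : G.Meas)).insert ⊤).subset ?_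
  rintro m (rfl | ⟨f, rfl, hf⟩)
  · exact Set.mem_insert _ _
  · refine Or.inr ⟨f, fun i _ => ?_, rfl⟩
    by_cases hi : Even (i : ℕ)
    · simp [(hf i).1 hi]
    · exact (hf i).2 hi

theorem finite_setOf_isMeasure : {ρ : V → G.Meas | G.IsMeasure ρ}.Finite :=
  (Set.Finite.pi fun _ => G.finite_setOf_inMEven).subset fun _ hρ v _ => hρ v

variable {G}

theorem trunc_mono (k : ℕ) : Monotone (G.trunc k) :=
  (Pi.Lex.monotone_toLex_ite (p := fun j : Fin G.d => (j : ℕ) ≤ k)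
    (fun _ _ hij hj => le_trans (Fin.le_def.1 hij) hj) 0).withTop_map

theorem trunc_eq_top_iff {k : ℕ} {m : G.Meas} : G.trunc k m = ⊤ ↔ m = ⊤ :=
  WithTop.map_eq_top_iff

theorem geAt_of_le {k : ℕ} {a b : G.Meas} (h : b ≤ a) : G.geAt k a b :=
  G.trunc_mono k h

theorem gtAt_top {k : ℕ} {a : G.Meas} (ha : a ≠ ⊤) : G.gtAt k ⊤ a :=
  lt_top_iff_ne_top.2 (trunc_eq_top_iff.not.2 ha)

theorem progCond_top (ρ : V → G.Meas) (v w : V) : G.progCond ρ v w ⊤ := by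
  unfold progCond
  split_ifs
  · exact geAt_of_le le_top
  · by_cases hw : ρ w = ⊤
    · exact Or.inr ⟨rfl, hw⟩
    · exact Or.inl (gtAt_top hw)

theorem progCond_of_le {ρ ρ' : V → G.Meas} {v w : V} {m : G.Meas} (h : ρ w ≤ ρ' w)
    (hm : G.progCond ρ' v w m) : G.progCond ρ v w m := by
  rcases eq_or_ne m ⊤ with rfl | hm_top
  · exact progCond_top ρ v w
  unfold progCond at hm ⊢
  split_ifs at hm ⊢
  · exact (G.trunc_mono _ h).trans hm
  · exact Or.inl ((G.trunc_mono _ h).trans_lt (hm.resolve_right fun h => hm_top h.1))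

theorem progCond_of_geAt {ρ : V → G.Meas} {v w : V} {m m' : G.Meas}
    (hm : G.progCond ρ v w m) (hm' : G.geAt (G.prio v) m' m) : G.progCond ρ v w m' := by
  unfold progCond at hm ⊢
  split_ifs at hm ⊢
  · exact hm.trans hm'
  · rcases hm with hm | ⟨rfl, hw⟩
    · exact Or.inl (hm.trans_le hm')
    · exact Or.inr ⟨trunc_eq_top_iff.1 (top_le_iff.1 hm'), hw⟩

theorem isLeast_Prog (ρ : V → G.Meas) (v w : V) :
    IsLeast {m | G.inMEven m ∧ G.progCond ρ v w m} (G.Prog ρ v w) := by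
  have h : ∃ m, IsLeast {m | G.inMEven m ∧ G.progCond ρ v w m} m :=
    (G.finite_setOf_inMEven.subset fun _ hm => hm.1).exists_isLeast
      ⟨⊤, Or.inl rfl, progCond_top ρ v w⟩
  rw [Prog, dif_pos h]
  exact h.choose_spec

theorem inMEven_Prog (ρ : V → G.Meas) (v w : V) : G.inMEven (G.Prog ρ v w) :=
  (isLeast_Prog ρ v w).1.1

theorem Prog_mono {ρ ρ' : V → G.Meas} (h : ρ ≤ ρ') (v w : V) : G.Prog ρ v w ≤ G.Prog ρ' v w :=
  (isLeast_Prog ρ v w).2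
    ⟨inMEven_Prog ρ' v w, progCond_of_le (h w) (isLeast_Prog ρ' v w).1.2⟩

theorem geAt_Prog_iff {ρ : V → G.Meas} {v w : V} {a : G.Meas} (ha : G.inMEven a) :
    G.geAt (G.prio v) a (G.Prog ρ v w) ↔ G.Prog ρ v w ≤ a :=
  ⟨fun h => (isLeast_Prog ρ v w).2 ⟨ha, progCond_of_geAt (isLeast_Prog ρ v w).1.2 h⟩,
    geAt_of_le⟩

variable (G)

def progSet (ρ : V → G.Meas) (v : V) : Set G.Meas :=
  {m | ∃ w, G.E v w ∧ m = G.Prog ρ v w}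

def liftTarget (ρ : V → G.Meas) (v : V) : G.Meas :=
  if G.ownerEven v = true then sLeast (G.progSet ρ v) ⊤ else sGreatest (G.progSet ρ v) ⊤

def liftAll (ρ : V → G.Meas) : V → G.Meas :=
  fun v => max (ρ v) (G.liftTarget ρ v)

variable {G}

theorem progSet_finite (ρ : V → G.Meas) (v : V) : (G.progSet ρ v).Finite :=
  (Set.finite_range (G.Prog ρ v)).subset fun _ ⟨w, _, hm⟩ => ⟨w, hm.symm⟩

theorem progSet_nonempty (ρ : V → G.Meas) (v : V) : (G.progSet ρ v).Nonempty :=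
  let ⟨w, hw⟩ := G.total v
  ⟨G.Prog ρ v w, w, hw, rfl⟩

theorem isLeast_sLeast_progSet (ρ : V → G.Meas) (v : V) :
    IsLeast (G.progSet ρ v) (sLeast (G.progSet ρ v) ⊤) :=
  isLeast_sLeast ((progSet_finite ρ v).exists_isLeast (progSet_nonempty ρ v)) ⊤

theorem isGreatest_sGreatest_progSet (ρ : V → G.Meas) (v : V) :
    IsGreatest (G.progSet ρ v) (sGreatest (G.progSet ρ v) ⊤) :=
  isGreatest_sGreatest ((progSet_finite ρ v).exists_isGreatest (progSet_nonempty ρ v)) ⊤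

theorem liftTarget_mem_progSet (ρ : V → G.Meas) (v : V) : G.liftTarget ρ v ∈ G.progSet ρ v := by
  unfold liftTarget
  split_ifs
  exacts [(isLeast_sLeast_progSet ρ v).1, (isGreatest_sGreatest_progSet ρ v).1]

theorem liftTarget_mono {ρ ρ' : V → G.Meas} (h : ρ ≤ ρ') (v : V) :
    G.liftTarget ρ v ≤ G.liftTarget ρ' v := by
  unfold liftTarget
  split_ifs
  · obtain ⟨w, hw, hw'⟩ := (isLeast_sLeast_progSet ρ' v).1
    calc sLeast (G.progSet ρ v) ⊤ ≤ G.Prog ρ v w := (isLeast_sLeast_progSet ρ v).2 ⟨w, hw, rfl⟩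
      _ ≤ G.Prog ρ' v w := Prog_mono h v w
      _ = sLeast (G.progSet ρ' v) ⊤ := hw'.symm
  · obtain ⟨w, hw, hw'⟩ := (isGreatest_sGreatest_progSet ρ v).1
    calc sGreatest (G.progSet ρ v) ⊤ = G.Prog ρ v w := hw'
      _ ≤ G.Prog ρ' v w := Prog_mono h v w
      _ ≤ sGreatest (G.progSet ρ' v) ⊤ := (isGreatest_sGreatest_progSet ρ' v).2 ⟨w, hw, rfl⟩

theorem monotone_liftAll : Monotone G.liftAll :=
  fun _ _ h v => max_le_max (h v) (liftTarget_mono h v)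

theorem le_liftAll (ρ : V → G.Meas) : ρ ≤ G.liftAll ρ :=
  fun _ => le_max_left _ _

theorem isMeasure_liftAll {ρ : V → G.Meas} (hρ : G.IsMeasure ρ) : G.IsMeasure (G.liftAll ρ) := by
  intro v
  obtain ⟨w, -, hw⟩ := liftTarget_mem_progSet ρ v
  rcases max_choice (ρ v) (G.liftTarget ρ v) with h | h <;> rw [liftAll, h]
  exacts [hρ v, hw ▸ inMEven_Prog ρ v w]

theorem isFixedPt_liftAll_iff {ρ : V → G.Meas} :
    Function.IsFixedPt G.liftAll ρ ↔ ∀ v, G.liftTarget ρ v ≤ ρ v := by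
  simp only [Function.IsFixedPt, funext_iff, liftAll, max_eq_left_iff]

theorem forall_lift_eq_iff [DecidableEq V] {ρ : V → G.Meas} :
    (∀ v, G.Lift ρ v = ρ) ↔ Function.IsFixedPt G.liftAll ρ := by
  have hLift : ∀ v, G.Lift ρ v = Function.update ρ v (G.liftAll ρ v) := fun v =>
    congrArg (Function.update ρ v) (apply_ite (max (ρ v)) _ _ _).symm
  rw [Function.IsFixedPt, funext_iff]
  simp only [hLift, Function.update_eq_self_iff]

theorem sLeast_progSet_le_iff {ρ : V → G.Meas} {v : V} {a : G.Meas} :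
    sLeast (G.progSet ρ v) ⊤ ≤ a ↔ ∃ w, G.E v w ∧ G.Prog ρ v w ≤ a := by
  refine ⟨fun h => ?_, fun ⟨w, hw, hwa⟩ => ((isLeast_sLeast_progSet ρ v).2 ⟨w, hw, rfl⟩).trans hwa⟩
  obtain ⟨w, hw, hw'⟩ := (isLeast_sLeast_progSet ρ v).1
  exact ⟨w, hw, hw' ▸ h⟩

theorem sGreatest_progSet_le_iff {ρ : V → G.Meas} {v : V} {a : G.Meas} :
    sGreatest (G.progSet ρ v) ⊤ ≤ a ↔ ∀ w, G.E v w → G.Prog ρ v w ≤ a := by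
  rw [isLUB_le_iff (isGreatest_sGreatest_progSet ρ v).isLUB]
  exact ⟨fun h w hw => h ⟨w, hw, rfl⟩, fun h _ ⟨w, hw, hm⟩ => hm ▸ h w hw⟩

theorem isGPM_iff {ρ : V → G.Meas} (hρ : G.IsMeasure ρ) :
    G.IsGPM ρ ↔ ∀ v, G.liftTarget ρ v ≤ ρ v := by
  refine (and_iff_right hρ).trans (forall_congr' fun v => ?_)
  simp only [geAt_Prog_iff (hρ v), liftTarget]
  cases G.ownerEven v <;> simp [sLeast_progSet_le_iff, sGreatest_progSet_le_iff]

end ParityGame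

/-- there is a least simultaneous fixpoint `ρ̄` of all the lifting
operators; it is a game parity progress measure and is below every game parity
progress measure. -/
theorem least_lift_fixpoint_is_least_progress_measure
    {V : Type*} [Fintype V] [DecidableEq V] (G : ParityGame V) :
    ∃ ρbar : V → G.Meas, G.IsMeasure ρbar ∧
      (∀ v, G.Lift ρbar v = ρbar) ∧
      (∀ ρ : V → G.Meas, G.IsMeasure ρ → (∀ v, G.Lift ρ v = ρ) → ∀ v, ρbar v ≤ ρ v) ∧
      G.IsGPM ρbar ∧
      (∀ ρ : V → G.Meas, G.IsGPM ρ → ∀ v, ρbar v ≤ ρ v) := by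
  set ρs : ℕ → V → G.Meas := fun n => G.liftAll^[n] fun _ => G.zeroMeas
  have hmeas : ∀ n, G.IsMeasure (ρs n) := fun n =>
    Function.Iterate.rec G.IsMeasure (fun _ => G.inMEven_zeroMeas) (fun _ => isMeasure_liftAll) n
  obtain ⟨N, hfix⟩ := Function.exists_isFixedPt_iterate G.le_liftAll
    (G.finite_setOf_isMeasure.subset (Set.range_subset_iff.2 hmeas))
  have hleast : ∀ ρ, Function.IsFixedPt G.liftAll ρ → ρs N ≤ ρ := fun _ hρ =>
    monotone_liftAll.iterate_le_of_isFixedPt (fun _ => G.zeroMeas_le _) hρ N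
  exact ⟨ρs N, hmeas N, forall_lift_eq_iff.2 hfix,
    fun ρ _ hρ => hleast ρ (forall_lift_eq_iff.1 hρ),
    (isGPM_iff (hmeas N)).2 (isFixedPt_liftAll_iff.1 hfix),
    fun ρ hρ => hleast ρ (isFixedPt_liftAll_iff.2 ((isGPM_iff hρ.1).1 hρ))⟩

end
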